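/- arXiv:1807.04863 — 2 statements merged into one kernel-verified Lean document; each statement's English description precedes it below -/
import Mathlib

section
/- (Hoffman–Johnson decomposition, Eq. 4 of the paper) Let p(x) be a data distribution and q(z|x) a Markov kernel (the variational posterior). Define the variational joint q(x,z) = p(x) ⊗ q(z|x), the aggregated posterior q(z) = E_{p(x)}[q(z|x)] (the z-marginal of the variational joint), and the variational mutual information I_q(x,z) = KL(q(x,z) ‖ p(x) × q(z)). Then for any prior distribution p(z), E_{x∼p(x)}[KL(q(z|x) ‖ p(z))] = I_q(x,z) + KL(q(z) ‖ p(z)). -/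
/-!
Write `q(x,z) = p(x) ⊗ q(z|x)` and `q(z)` for its second marginal. Disintegrated along `x`, the
density of `q(x,z)` against `p(x) × p(z)` is the kernel density `dq(z|x)/dp(z)`, so
`KL(q(x,z) ‖ p(x) × p(z))` is the expected divergence `E_{p(x)} KL(q(z|x) ‖ p(z))`.
Disintegrated along `z`, the joint is `q(z) ⊗ q(x|z)` with the posterior kernel, while the two
product measures are `p(z) ⊗ p(x)` and `q(z) ⊗ p(x)`; the chain rule for KL then splits
`KL(q(x,z) ‖ p(x) × p(z))` into `KL(q(z) ‖ p(z)) + KL(q(x,z) ‖ p(x) × q(z))`.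
-/

open MeasureTheory ProbabilityTheory
open scoped ENNReal Classical

/-- The Kullback–Leibler divergence between two measures, defined as the integral of the
log-likelihood ratio when `μ ≪ ν` and this ratio is integrable, and `∞` otherwise. -/

noncomputable def klDiv {α : Type*} [MeasurableSpace α] (μ ν : Measure α) : ℝ≥0∞ :=
  if μ ≪ ν ∧ Integrable (llr μ ν) μ then ENNReal.ofReal (∫ x, llr μ ν x ∂μ) else ⊤

/-- Mathlib's `klDiv` adds the mass correction `ν.real univ - μ.real univ` to the integral. -/
lemma klDiv_eq_informationTheory_klDiv {α : Type*} [MeasurableSpace α] {μ ν : Measure α}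
    (h : μ Set.univ = ν Set.univ) :
    klDiv μ ν = InformationTheory.klDiv μ ν := by
  have h_real : ν.real Set.univ = μ.real Set.univ := by simp only [measureReal_def, h]
  by_cases h_int : μ ≪ ν ∧ Integrable (llr μ ν) μ
  · rw [klDiv, if_pos h_int, InformationTheory.klDiv_of_ac_of_integrable h_int.1 h_int.2,
      h_real, add_sub_cancel_right]
  · rw [klDiv, if_neg h_int, eq_comm, InformationTheory.klDiv_eq_top_iff]
    exact fun h_ac h_int' ↦ h_int ⟨h_ac, h_int'⟩

namespace InformationTheory

variable {α β : Type*} {mα : MeasurableSpace α} {mβ : MeasurableSpace β}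

lemma klDiv_map_measurableEquiv (μ ν : Measure α) [IsFiniteMeasure μ] [IsFiniteMeasure ν]
    (e : α ≃ᵐ β) :
    klDiv (μ.map e) (ν.map e) = klDiv μ ν := by
  refine le_antisymm (klDiv_map_le μ ν e.measurable) ?_
  calc klDiv μ ν = klDiv ((μ.map e).map e.symm) ((ν.map e).map e.symm) := by
        rw [MeasurableEquiv.map_symm_map, MeasurableEquiv.map_symm_map]
    _ ≤ klDiv (μ.map e) (ν.map e) := klDiv_map_le _ _ e.symm.measurable

section ConditionalKL

variable [MeasurableSpace.CountableOrCountablyGenerated α β] {μ : Measure α}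
  {κ η : Kernel α β} [IsFiniteKernel κ] [IsFiniteKernel η]

lemma _root_.ProbabilityTheory.rnDeriv_measure_compProd_right [IsFiniteMeasure μ]
    (h_ac : ∀ᵐ a ∂μ, κ a ≪ η a) :
    (μ ⊗ₘ κ).rnDeriv (μ ⊗ₘ η) =ᵐ[μ ⊗ₘ η] fun p ↦ κ.rnDeriv η p.1 p.2 := by
  have h_eq : μ ⊗ₘ κ = (μ ⊗ₘ η).withDensity (fun p ↦ κ.rnDeriv η p.1 p.2) := by
    rw [← Measure.compProd_withDensity (κ.measurable_rnDeriv η)]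
    refine Measure.compProd_congr ?_
    filter_upwards [h_ac] with a ha using (Kernel.withDensity_rnDeriv_eq ha).symm
  rw [h_eq]
  exact Measure.rnDeriv_withDensity _ (κ.measurable_rnDeriv η)

lemma lintegral_klDiv_eq_top_of_not_ae_absolutelyContinuous (h : ¬ ∀ᵐ a ∂μ, κ a ≪ η a) :
    ∫⁻ a, klDiv (κ a) (η a) ∂μ = ∞ := by
  have h_pos : μ {a | κ a ≪ η a}ᶜ ≠ 0 := fun h_zero ↦ h (ae_iff.mpr h_zero)
  refine eq_top_iff.mpr ?_
  calc ∞ = ∫⁻ a, {a | κ a ≪ η a}ᶜ.indicator (fun _ ↦ ∞) a ∂μ := by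
        rw [lintegral_indicator_const (Kernel.measurableSet_absolutelyContinuous κ η).compl,
          ENNReal.top_mul h_pos]
    _ ≤ ∫⁻ a, klDiv (κ a) (η a) ∂μ := lintegral_mono fun a ↦ by
        by_cases ha : κ a ≪ η a
        · simp [ha]
        · simp [ha, klDiv_of_not_ac]

variable (μ κ η) in
lemma lintegral_klDiv_eq_klDiv_compProd [IsFiniteMeasure μ] :
    ∫⁻ a, klDiv (κ a) (η a) ∂μ = klDiv (μ ⊗ₘ κ) (μ ⊗ₘ η) := by
  by_cases h_ac : ∀ᵐ a ∂μ, κ a ≪ η a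
  swap
  · rw [lintegral_klDiv_eq_top_of_not_ae_absolutelyContinuous h_ac,
      klDiv_of_not_ac (mt Measure.absolutelyContinuous_compProd_right_iff.mp h_ac)]
  rw [klDiv_eq_lintegral_klFun_of_ac (Measure.absolutelyContinuous_compProd_right_iff.mpr h_ac),
    lintegral_congr_ae ((rnDeriv_measure_compProd_right h_ac).mono fun p hp ↦ by rw [hp])]
  beta_reduce
  rw [Measure.lintegral_compProd (by have := κ.measurable_rnDeriv η; fun_prop)]
  refine lintegral_congr_ae ?_
  filter_upwards [h_ac] with a ha
  rw [klDiv_eq_lintegral_klFun_of_ac ha]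
  refine lintegral_congr_ae ?_
  filter_upwards [Kernel.rnDeriv_eq_rnDeriv_measure (κ := κ) (η := η) (a := a)] with b hb
  rw [hb]

end ConditionalKL

theorem klDiv_compProd_prod_eq_klDiv_prod_snd_add [StandardBorelSpace α] (μ : Measure α)
    [IsProbabilityMeasure μ] (κ : Kernel α β) [IsMarkovKernel κ] (ν : Measure β)
    [IsFiniteMeasure ν] :
    klDiv (μ ⊗ₘ κ) (μ.prod ν) =
      klDiv (μ ⊗ₘ κ) (μ.prod (μ ⊗ₘ κ).snd) + klDiv (μ ⊗ₘ κ).snd ν := by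
  have := nonempty_of_isProbabilityMeasure μ
  have h_swap (ξ : Measure β) [IsFiniteMeasure ξ] :
      (μ.prod ξ).map Prod.swap = ξ ⊗ₘ Kernel.const β μ := by
    rw [Measure.prod_swap, Measure.compProd_const]
  have h_coe : ⇑(MeasurableEquiv.prodComm : α × β ≃ᵐ β × α) = Prod.swap := rfl
  rw [← klDiv_map_measurableEquiv _ _ MeasurableEquiv.prodComm,
    ← klDiv_map_measurableEquiv (μ ⊗ₘ κ) _ MeasurableEquiv.prodComm, h_coe, h_swap, h_swap,
    Measure.snd_compProd, ← compProd_posterior_eq_map_swap, klDiv_compProd_eq_add, add_comm]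

end InformationTheory

theorem hoffman_johnson_decomposition_general
    {X Z : Type*} [MeasurableSpace X] [StandardBorelSpace X]
    [MeasurableSpace Z] [StandardBorelSpace Z]
    (px : Measure X) [IsProbabilityMeasure px]
    (pz : Measure Z) [IsProbabilityMeasure pz]
    (κ : ProbabilityTheory.Kernel X Z) [ProbabilityTheory.IsMarkovKernel κ] :
    ∫⁻ x, klDiv (κ x) pz ∂px
      = klDiv (px ⊗ₘ κ) (px.prod ((px ⊗ₘ κ).snd)) + klDiv ((px ⊗ₘ κ).snd) pz := by
  simp only [klDiv_eq_informationTheory_klDiv, measure_univ]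
  rw [← InformationTheory.klDiv_compProd_prod_eq_klDiv_prod_snd_add, ← Measure.compProd_const,
    ← InformationTheory.lintegral_klDiv_eq_klDiv_compProd]
  rfl

/-- **Hoffman–Johnson decomposition.**  Let `px` be the data distribution, `κ` the variational
posterior (a Markov kernel `x ↦ q(z|x)`) and `pz` the prior.  The variational joint is
`q(x,z) = px ⊗ₘ κ`, the aggregated posterior `q(z)` is its second marginal, and the variational
mutual information is `I_q(x,z) = KL(q(x,z) ‖ px × q(z))`.  If `q(z|x) ≪ p(z)` for `px`-a.e. `x`
and the expected KL is finite, then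
`E_{x ∼ px}[KL(q(z|x) ‖ p(z))] = I_q(x,z) + KL(q(z) ‖ p(z))`. -/
theorem hoffman_johnson_decomposition
    {X Z : Type*} [MeasurableSpace X] [StandardBorelSpace X]
    [MeasurableSpace Z] [StandardBorelSpace Z]
    (px : Measure X) [IsProbabilityMeasure px]
    (pz : Measure Z) [IsProbabilityMeasure pz]
    (κ : ProbabilityTheory.Kernel X Z) [ProbabilityTheory.IsMarkovKernel κ]
    (habs : ∀ᵐ x ∂px, κ x ≪ pz)
    (hfin : ∫⁻ x, klDiv (κ x) pz ∂px ≠ ⊤) :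
    ∫⁻ x, klDiv (κ x) pz ∂px
      = klDiv (px ⊗ₘ κ) (px.prod ((px ⊗ₘ κ).snd)) + klDiv ((px ⊗ₘ κ).snd) pz :=
  hoffman_johnson_decomposition_general px pz κ
end

section
/- ('Bits-back' collapse optimum) Suppose the likelihood family is flexible enough to contain the data distribution, i.e. there exists θ* with p_{θ*}(x|z) = p(x) for every z. Then setting p_θ(x|z) = p(x) and q(z|x) = p(z) attains the global maximum of the population ELBO over all likelihoods and variational kernels, and the maximal value is −H_p(x); at this optimum the variational posterior is independent of the data (latent variable collapse). -/
open MeasureTheory Real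

lemma kl_pt (a b : ℝ) (ha : 0 ≤ a) (hb : 0 ≤ b) (h : a ≠ 0 → 0 < b) :
    a - b ≤ a * log (a / b) := by
  rcases ha.eq_or_lt with h0 | hpos
  · simp only [← h0, zero_sub, zero_mul]; linarith
  · have hbp := h hpos.ne'
    have hlog : log (b / a) ≤ b / a - 1 := Real.log_le_sub_one_of_pos (div_pos hbp hpos)
    have hd : log (a / b) = - log (b / a) := by
      rw [← Real.log_inv]; congr 1; field_simp
    rw [hd]
    have h2 : a * (b / a) = b := by field_simp
    nlinarith [mul_le_mul_of_nonneg_left hlog hpos.le]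

/-- **'Bits-back' collapse optimum.**  The data `x` ranges over `𝓧` with reference measure
`νX` and the latent `z` over `𝓩` with reference measure `νZ`.  `px` is the data density
(with finite entropy `H_p(x) = −∫ px log px`) and `pz` is a fixed prior density.  The
population ELBO of a likelihood kernel `f z x = p_θ(x|z)` and a variational kernel
`q x z = q(z|x)` is
`ELBO f q = E_{x∼p(x)} E_{z∼q(z|x)}[log f z x] − E_{x∼p(x)}[KL(q(z|x) ‖ p(z))]`.
Suppose the likelihood family is flexible enough to contain `px`, i.e. take
`f* = fun _ x => px x` (so `p_{θ*}(x|z) = p(x)` for every `z`) and `q* = fun _ z => pz z`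
(so the variational posterior equals the prior, independently of the data: latent variable
collapse).  Then `(f*, q*)` attains the global maximum of the population ELBO over all
likelihood and variational kernels, and the maximal value is `−H_p(x)`. -/
theorem bits_back_collapse_optimum
    {𝓧 𝓩 : Type*} [MeasurableSpace 𝓧] [MeasurableSpace 𝓩]
    (νX : Measure 𝓧) (νZ : Measure 𝓩) [SigmaFinite νX] [SigmaFinite νZ]
    (px : 𝓧 → ℝ) (pz : 𝓩 → ℝ)
    (hpx_meas : Measurable px) (hpz_meas : Measurable pz)
    (hpx_nonneg : ∀ x, 0 ≤ px x) (hpz_nonneg : ∀ z, 0 ≤ pz z)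
    (hpx_int : Integrable px νX) (hpx_one : ∫ x, px x ∂νX = 1)
    (hpz_int : Integrable pz νZ) (hpz_one : ∫ z, pz z ∂νZ = 1)
    -- the data entropy is finite
    (hent_int : Integrable (fun x => px x * log (px x)) νX) :
    -- population ELBO as a functional of the likelihood kernel `f` and variational kernel `q`
    let ELBO : (𝓩 → 𝓧 → ℝ) → (𝓧 → 𝓩 → ℝ) → ℝ := fun f q =>
      (∫ x, px x * ∫ z, q x z * log (f z x) ∂νZ ∂νX)
        - ∫ x, px x * ∫ z, q x z * log (q x z / pz z) ∂νZ ∂νX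
    -- the collapsed pair `(f*, q*)` attains the value `−H_p(x)` ...
    (ELBO (fun _ x => px x) (fun _ z => pz z) = -(-∫ x, px x * log (px x) ∂νX))
    -- ... and it is a global maximum over all likelihood and variational kernels
    ∧ ∀ (f : 𝓩 → 𝓧 → ℝ) (q : 𝓧 → 𝓩 → ℝ),
        Measurable (fun p : 𝓩 × 𝓧 => f p.1 p.2) →
        Measurable (fun p : 𝓧 × 𝓩 => q p.1 p.2) →
        (∀ z x, 0 ≤ f z x) → (∀ x z, 0 ≤ q x z) →
        -- `f z` and `q x` are probability densities
        (∀ z, ∫ x, f z x ∂νX = 1) → (∀ x, ∫ z, q x z ∂νZ = 1) →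
        -- the variational joint is absolutely continuous w.r.t. the model joint
        (∀ᵐ p ∂(νX.prod νZ), px p.1 * q p.1 p.2 ≠ 0 → 0 < pz p.2 * f p.2 p.1) →
        -- all the integrals involved are finite
        Integrable (fun p : 𝓧 × 𝓩 => px p.1 * q p.1 p.2) (νX.prod νZ) →
        Integrable (fun p : 𝓧 × 𝓩 => pz p.2 * f p.2 p.1) (νX.prod νZ) →
        Integrable (fun p : 𝓧 × 𝓩 => px p.1 * q p.1 p.2 * log (f p.2 p.1)) (νX.prod νZ) →
        Integrable (fun p : 𝓧 × 𝓩 => px p.1 * q p.1 p.2 * log (q p.1 p.2 / pz p.2))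
          (νX.prod νZ) →
        Integrable
          (fun p : 𝓧 × 𝓩 =>
            px p.1 * q p.1 p.2 * log ((px p.1 * q p.1 p.2) / (pz p.2 * f p.2 p.1)))
          (νX.prod νZ) →
        ELBO f q ≤ ELBO (fun _ x => px x) (fun _ z => pz z) := by
  intro ELBO
  -- value of the collapsed ELBO
  have hstar : ELBO (fun _ x => px x) (fun _ z => pz z) = ∫ x, px x * log (px x) ∂νX := by
    show (∫ x, px x * ∫ z, pz z * log (px x) ∂νZ ∂νX)
        - ∫ x, px x * ∫ z, pz z * log (pz z / pz z) ∂νZ ∂νX = _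
    have h1 : ∀ x : 𝓧, (∫ z, pz z * log (px x) ∂νZ) = log (px x) := by
      intro x
      rw [integral_mul_const, hpz_one, one_mul]
    have h2 : ∀ z : 𝓩, pz z * log (pz z / pz z) = 0 := by
      intro z
      by_cases h : pz z = 0
      · simp [h]
      · rw [div_self h, Real.log_one, mul_zero]
    simp_rw [h1, h2]
    simp
  refine ⟨by rw [hstar, neg_neg], ?_⟩
  intro f q hf_meas hq_meas hf0 hq0 hf1 hq1 hac hIA hIB hI1 hI2 hI3
  rw [hstar]
  -- integral of the variational joint is 1
  have hA1 : ∫ p, px p.1 * q p.1 p.2 ∂(νX.prod νZ) = 1 := by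
    rw [MeasureTheory.integral_prod _ hIA]
    simp_rw [integral_const_mul, hq1, mul_one, hpx_one]
  -- integral of the model joint is 1
  have hB1 : ∫ p, pz p.2 * f p.2 p.1 ∂(νX.prod νZ) = 1 := by
    rw [MeasureTheory.integral_prod_symm _ hIB]
    simp_rw [integral_const_mul, hf1, mul_one, hpz_one]
  -- the KL term is nonnegative
  have hKL : 0 ≤ ∫ p, px p.1 * q p.1 p.2 *
      log ((px p.1 * q p.1 p.2) / (pz p.2 * f p.2 p.1)) ∂(νX.prod νZ) := by
    have hmono := integral_mono_ae (hIA.sub hIB) hI3 ?_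
    · simp only [Pi.sub_apply] at hmono
      rw [integral_sub hIA hIB, hA1, hB1] at hmono
      linarith
    · filter_upwards [hac] with p hp
      exact kl_pt _ _ (mul_nonneg (hpx_nonneg _) (hq0 _ _))
        (mul_nonneg (hpz_nonneg _) (hf0 _ _)) hp
  -- a.e. pointwise identity rearranging the ELBO integrand
  have hid : ∀ᵐ p ∂(νX.prod νZ),
      px p.1 * q p.1 p.2 * log (f p.2 p.1) - px p.1 * q p.1 p.2 * log (q p.1 p.2 / pz p.2)
        = px p.1 * q p.1 p.2 * log (px p.1)
          - px p.1 * q p.1 p.2 * log ((px p.1 * q p.1 p.2) / (pz p.2 * f p.2 p.1)) := by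
    filter_upwards [hac] with p hp
    by_cases h0 : px p.1 * q p.1 p.2 = 0
    · rw [h0]; ring
    · have hBpos := hp h0
      have hpx0 : px p.1 ≠ 0 := fun h => h0 (by rw [h, zero_mul])
      have hq0' : q p.1 p.2 ≠ 0 := fun h => h0 (by rw [h, mul_zero])
      have hpz0 : pz p.2 ≠ 0 := by
        intro h; rw [h, zero_mul] at hBpos; exact lt_irrefl 0 hBpos
      have hff0 : f p.2 p.1 ≠ 0 := by
        intro h; rw [h, mul_zero] at hBpos; exact lt_irrefl 0 hBpos
      rw [Real.log_div hq0' hpz0,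
        Real.log_div (mul_ne_zero hpx0 hq0') (mul_ne_zero hpz0 hff0),
        Real.log_mul hpx0 hq0', Real.log_mul hpz0 hff0]
      ring
  -- integrability of (x,z) ↦ px x * q x z * log (px x)
  have hid' : ∀ᵐ p ∂(νX.prod νZ),
      (px p.1 * q p.1 p.2 * log (f p.2 p.1) - px p.1 * q p.1 p.2 * log (q p.1 p.2 / pz p.2))
        + px p.1 * q p.1 p.2 * log ((px p.1 * q p.1 p.2) / (pz p.2 * f p.2 p.1))
        = px p.1 * q p.1 p.2 * log (px p.1) := by
    filter_upwards [hid] with p h; linarith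
  have hIg : Integrable (fun p : 𝓧 × 𝓩 => px p.1 * q p.1 p.2 * log (px p.1)) (νX.prod νZ) :=
    Integrable.congr ((hI1.sub hI2).add hI3) hid'
  have hgval : ∫ p, px p.1 * q p.1 p.2 * log (px p.1) ∂(νX.prod νZ)
      = ∫ x, px x * log (px x) ∂νX := by
    rw [MeasureTheory.integral_prod _ hIg]
    have h : ∀ x : 𝓧, (∫ z, px x * q x z * log (px x) ∂νZ) = px x * log (px x) := by
      intro x
      have e : (fun z => px x * q x z * log (px x))
          = fun z => (px x * log (px x)) * q x z := by funext z; ring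
      rw [e, integral_const_mul, hq1 x, mul_one]
    simp_rw [h]
  -- express the ELBO as a product-space integral
  have hEq1 : (∫ x, px x * ∫ z, q x z * log (f z x) ∂νZ ∂νX)
      = ∫ p, px p.1 * q p.1 p.2 * log (f p.2 p.1) ∂(νX.prod νZ) := by
    rw [MeasureTheory.integral_prod _ hI1]
    simp_rw [mul_assoc, integral_const_mul]
  have hEq2 : (∫ x, px x * ∫ z, q x z * log (q x z / pz z) ∂νZ ∂νX)
      = ∫ p, px p.1 * q p.1 p.2 * log (q p.1 p.2 / pz p.2) ∂(νX.prod νZ) := by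
    rw [MeasureTheory.integral_prod _ hI2]
    simp_rw [mul_assoc, integral_const_mul]
  show (∫ x, px x * ∫ z, q x z * log (f z x) ∂νZ ∂νX)
      - (∫ x, px x * ∫ z, q x z * log (q x z / pz z) ∂νZ ∂νX) ≤ _
  rw [hEq1, hEq2, ← integral_sub hI1 hI2, integral_congr_ae hid, integral_sub hIg hI3,
    hgval]
  linarith
end
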